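/- Let ε > 0, μ > 0, Δt > 0, |P₁| > 0 be real numbers, let k be a real number, and for i = 1, 2, 3 let |eᵢ| > 0 and |*eᵢ| > 0 be real numbers. Let ξ, H₁, E₁, E₂, E₃ be complex numbers with H₁ ≠ 0 satisfying: for each i = 1, 2, 3, Eᵢ·ξ = Eᵢ + (Δt/(ε·|*eᵢ|))·(1 − cos(k·|*eᵢ|))·H₁·ξ, and H₁·ξ = H₁ − (Δt/(μ·|P₁|))·(E₁·|e₁| + E₂·|e₂| + E₃·|e₃|)·ξ. Then |ξ| ≤ 1. (Unconditional stability of the implicit DEC scheme: the bound holds for every time step Δt > 0 and every spatial frequency k.) -/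

import Mathlib

/-!
Eliminating the edge unknowns `Eᵢ` from the scheme leaves `H₁ ((ξ - 1)² + A ξ²) = 0` with
`A = Δt/(μ|P₁|) ∑ |eᵢ| Δt/(ε|*eᵢ|) (1 - cos (k|*eᵢ|)) ≥ 0`. Hence `(1 - ξ⁻¹)² = -A ≤ 0`, so
`1 - ξ⁻¹` is purely imaginary, `Re ξ⁻¹ = 1` and `|ξ| ≤ 1` whatever `Δt` is.
-/

open Complex

namespace Complex

theorem re_eq_zero_of_sq_eq_neg_ofReal {w : ℂ} {A : ℝ} (hA : 0 ≤ A) (h : w ^ 2 = -A) :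
    w.re = 0 := by
  have hre : w.re * w.re - w.im * w.im = -A := by simpa [sq] using congrArg re h
  have him : w.re * w.im + w.im * w.re = 0 := by simpa [sq] using congrArg im h
  rcases mul_eq_zero.mp (show w.re * w.im = 0 by linarith) with h0 | h0
  · exact h0
  · rw [h0] at hre
    nlinarith [mul_self_nonneg w.re]

theorem norm_le_one_of_sub_one_sq_add_mul_sq_eq_zero {ξ : ℂ} {A : ℝ} (hA : 0 ≤ A)
    (h : (ξ - 1) ^ 2 + A * ξ ^ 2 = 0) : ‖ξ‖ ≤ 1 := by
  have hξ : ξ ≠ 0 := by rintro rfl; norm_num at h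
  have hw : (1 - ξ⁻¹) ^ 2 = -A := by
    field_simp
    linear_combination h
  have hre : (ξ⁻¹).re = 1 := by
    have := re_eq_zero_of_sq_eq_neg_ofReal hA hw
    simp only [sub_re, one_re] at this
    linarith
  have : 1 ≤ ‖ξ‖⁻¹ := by
    rw [← norm_inv, ← hre]
    exact re_le_norm _
  exact (one_le_inv₀ (norm_pos_iff.mpr hξ)).mp this

end Complex

theorem mul_sub_one_sq_add_sum_mul_sq_eq_zero {ι : Type*} [Fintype ι] (c w : ι → ℝ) (d : ℝ)
    (E : ι → ℂ) (H ξ : ℂ) (hE : ∀ i, E i * (ξ - 1) = c i * H * ξ)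
    (hH : H * (ξ - 1) = -(d * ∑ i, E i * w i * ξ)) :
    H * ((ξ - 1) ^ 2 + ((d * ∑ i, c i * w i : ℝ) : ℂ) * ξ ^ 2) = 0 := by
  have hsum : (ξ - 1) * ∑ i, E i * w i * ξ = H * ξ ^ 2 * ∑ i, (c i * w i : ℂ) := by
    simp only [Finset.mul_sum]
    refine Finset.sum_congr rfl fun i _ => ?_
    linear_combination w i * ξ * hE i
  push_cast
  linear_combination (ξ - 1) * hH - d * hsum

/-- Unconditional stability of the implicit DEC scheme for the TE wave: for
every time step `Δt > 0` and every spatial frequency `k`, any growth factor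
`ξ` satisfying the amplification-relation system has modulus `|ξ| ≤ 1`. -/
theorem idec_unconditional_stability
    (ε μ Δt P₁ k : ℝ) (hε : 0 < ε) (hμ : 0 < μ) (hΔt : 0 < Δt) (hP₁ : 0 < P₁)
    (e de : Fin 3 → ℝ) (he : ∀ i, 0 < e i) (hde : ∀ i, 0 < de i)
    (ξ H₁ : ℂ) (E : Fin 3 → ℂ) (hH₁ : H₁ ≠ 0)
    (hE : ∀ i : Fin 3,
      E i * ξ = E i + ((Δt / (ε * de i) : ℝ) : ℂ) *
        ((1 - Real.cos (k * de i) : ℝ) : ℂ) * H₁ * ξ)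
    (hH : H₁ * ξ = H₁ - ((Δt / (μ * P₁) : ℝ) : ℂ) *
        (E 0 * ((e 0 : ℝ) : ℂ) + E 1 * ((e 1 : ℝ) : ℂ) + E 2 * ((e 2 : ℝ) : ℂ)) * ξ) :
    ‖ξ‖ ≤ 1 := by
  set c : Fin 3 → ℝ := fun i => Δt / (ε * de i) * (1 - Real.cos (k * de i))
  have hc : ∀ i, 0 ≤ c i := fun i =>
    mul_nonneg (div_pos hΔt (mul_pos hε (hde i))).le (sub_nonneg.mpr (Real.cos_le_one _))
  have hA : 0 ≤ Δt / (μ * P₁) * ∑ i, c i * e i :=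
    mul_nonneg (div_pos hΔt (mul_pos hμ hP₁)).le
      (Finset.sum_nonneg fun i _ => mul_nonneg (hc i) (he i).le)
  have hE' : ∀ i, E i * (ξ - 1) = c i * H₁ * ξ := fun i => by
    push_cast [c] at hE ⊢
    linear_combination hE i
  have hH' : H₁ * (ξ - 1) = -((Δt / (μ * P₁) : ℝ) * ∑ i, E i * e i * ξ) := by
    rw [Fin.sum_univ_three]
    linear_combination hH
  have hξ := mul_eq_zero.mp (mul_sub_one_sq_add_sum_mul_sq_eq_zero c e _ E H₁ ξ hE' hH')
  exact norm_le_one_of_sub_one_sq_add_mul_sq_eq_zero hA (hξ.resolve_left hH₁)
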